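/- arXiv:2510.00074 — 3 statements merged into one kernel-verified Lean document; each statement's English description precedes it below -/
import Mathlib

section
/- Let n, m be positive integers with n ≢ m (mod 2). If d : ℝ → ℝ is an odd continuous function and g : ℝ → ℝ is an even continuous function, then for every a > 0, ∫_{−a}^{a} 𝓛ₙ(x) · 𝓛ₘ(x) dx = 0. -/
/-!
The recurrence preserves parity: if `p₁` is odd and `g` is even, then `𝓛ₙ(-x) = (-1)ⁿ 𝓛ₙ(x)`.
When `n` and `m` have different parities the integrand `𝓛ₙ 𝓛ₘ` is therefore odd, and the
integral of an odd function over a symmetric interval vanishes.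
-/

/-- Generalized Fibonacci polynomials of Lucas type:
`𝓛₀ = p₀`, `𝓛₁ = p₁`, `𝓛ₙ = d·𝓛ₙ₋₁ + g·𝓛ₙ₋₂` where `d = (2/p₀)·p₁`. -/
noncomputable def GFPL (p0 : ℝ) (p1 g : ℝ → ℝ) : ℕ → ℝ → ℝ
  | 0 => fun _ => p0
  | 1 => fun x => p1 x
  | n + 2 => fun x =>
      (2 / p0) * p1 x * GFPL p0 p1 g (n + 1) x + g x * GFPL p0 p1 g n x

theorem Function.Odd.intervalIntegral_eq_zero {E : Type*} [NormedAddCommGroup E]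
    [NormedSpace ℝ E] {f : ℝ → E} (hf : f.Odd) (a : ℝ) :
    ∫ x in -a..a, f x = 0 := by
  have h : ∫ x in -a..a, f x = -∫ x in -a..a, f x :=
    calc ∫ x in -a..a, f x = ∫ x in -a..a, f (-x) := by
          rw [intervalIntegral.integral_comp_neg, neg_neg]
      _ = -∫ x in -a..a, f x := by
          simp only [hf.eq, intervalIntegral.integral_neg]
  have htwo : (2 : ℝ) • ∫ x in -a..a, f x = 0 := by
    rw [two_smul]
    nth_rewrite 2 [h]
    exact add_neg_cancel _
  exact (smul_eq_zero.mp htwo).resolve_left two_ne_zero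

theorem Function.Odd.of_const_mul {α R : Type*} [Neg α] [Ring R] [NoZeroDivisors R]
    {f : α → R} {c : R} (hc : c ≠ 0)
    (hf : (fun x => c * f x).Odd) : f.Odd := fun x =>
  mul_left_cancel₀ hc (by rw [mul_neg]; exact hf x)

theorem GFPL_neg (p0 : ℝ) {p1 g : ℝ → ℝ} (hp1 : p1.Odd) (hg : g.Even) (n : ℕ) (x : ℝ) :
    GFPL p0 p1 g n (-x) = (-1) ^ n * GFPL p0 p1 g n x := by
  induction n using Nat.twoStepInduction with
  | zero => simp [GFPL]
  | one => simp [GFPL, hp1.eq]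
  | more n ih ih' =>
    simp only [GFPL, hp1.eq, hg.eq, ih, ih']
    ring

theorem GFPL_mul_odd_of_mod_two_ne (p0 : ℝ) {p1 g : ℝ → ℝ} (hp1 : p1.Odd) (hg : g.Even)
    {n m : ℕ} (hnm : n % 2 ≠ m % 2) : (GFPL p0 p1 g n * GFPL p0 p1 g m).Odd := by
  intro x
  have hsign : (-1 : ℝ) ^ (n + m) = -1 := (Nat.odd_iff.mpr (by omega)).neg_one_pow
  simp only [Pi.mul_apply, GFPL_neg p0 hp1 hg]
  linear_combination (GFPL p0 p1 g n x * GFPL p0 p1 g m x) * hsign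

theorem gfpl_orthogonal_diff_parity_general (p0 : ℝ)
    (hp0 : p0 = 1 ∨ p0 = -1 ∨ p0 = 2 ∨ p0 = -2)
    (p1 g : ℝ → ℝ)
    (hd : ∀ x, (2 / p0) * p1 (-x) = -((2 / p0) * p1 x))
    (hg : ∀ x, g (-x) = g x)
    (n m : ℕ) (hnm : n % 2 ≠ m % 2)
    (a : ℝ) :
    ∫ x in (-a)..a, GFPL p0 p1 g n x * GFPL p0 p1 g m x = 0 := by
  have hp0' : p0 ≠ 0 := by rcases hp0 with rfl | rfl | rfl | rfl <;> norm_num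
  have hp1 : p1.Odd := Function.Odd.of_const_mul (div_ne_zero two_ne_zero hp0') hd
  exact (GFPL_mul_odd_of_mod_two_ne p0 hp1 hg hnm).intervalIntegral_eq_zero a

theorem gfpl_orthogonal_diff_parity (p0 : ℝ)
    (hp0 : p0 = 1 ∨ p0 = -1 ∨ p0 = 2 ∨ p0 = -2)
    (p1 g : ℝ → ℝ)
    (hdc : Continuous p1) (hgc : Continuous g)
    (hd : ∀ x, (2 / p0) * p1 (-x) = -((2 / p0) * p1 x))
    (hg : ∀ x, g (-x) = g x)
    (n m : ℕ) (hn : 0 < n) (hm : 0 < m) (hnm : n % 2 ≠ m % 2)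
    (a : ℝ) (ha : 0 < a) :
    ∫ x in (-a)..a, GFPL p0 p1 g n x * GFPL p0 p1 g m x = 0 :=
  gfpl_orthogonal_diff_parity_general p0 hp0 p1 g hd hg n m hnm a
end

section
/- Let c, h, k, t be integers with c > 0, t > 0 odd, and k > h² (in particular k > 0). Let d(x) = c·x^t + h = α·p₁(x) and let g be the constant function g(x) = −k/4. Set s₂ = ((√k − h)/c)^{1/t} and s₁ = ((√k + h)/c)^{1/t}. Then for all nonnegative integers n, m: ∫_{−s₁}^{s₂} 𝓛ₙ(x) · 𝓛ₘ(x) · x^{t−1} / √(k − d(x)²) dx = 0 if n ≠ m, and this integral is > 0 if n = m. -/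
open MeasureTheory Real Set

lemma integral_cos_int_mul (j : ℤ) :
    ∫ θ in (0:ℝ)..π, Real.cos (j * θ) = if j = 0 then π else 0 := by
  rcases eq_or_ne j 0 with hj | hj
  · simp [hj]
  · have hjne : (j:ℝ) ≠ 0 := Int.cast_ne_zero.2 hj
    have hder : ∀ θ : ℝ, HasDerivAt (fun θ : ℝ => Real.sin (j * θ) / j) (Real.cos (j * θ)) θ := by
      intro θ
      have h1 : HasDerivAt (fun θ : ℝ => (j:ℝ) * θ) (j:ℝ) θ := by
        simpa using (hasDerivAt_id θ).const_mul (j:ℝ)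
      have h3 := ((Real.hasDerivAt_sin ((j:ℝ) * θ)).comp θ h1).div_const (j:ℝ)
      simpa [Function.comp, mul_div_assoc, mul_div_cancel_right₀ _ hjne] using h3
    rw [intervalIntegral.integral_eq_sub_of_hasDerivAt (fun θ _ => hder θ)
      ((Real.continuous_cos.comp (continuous_const.mul continuous_id)).intervalIntegrable _ _)]
    simp [hj, Real.sin_int_mul_pi]

lemma integral_cos_mul_cos_pi (j l : ℤ) :
    ∫ θ in (0:ℝ)..π, Real.cos (j * θ) * Real.cos (l * θ)
      = ((if j + l = 0 then π else 0) + (if j - l = 0 then π else 0)) / 2 := by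
  have h : ∀ θ : ℝ, Real.cos (j * θ) * Real.cos (l * θ)
      = (Real.cos (((j + l : ℤ)) * θ) + Real.cos (((j - l : ℤ)) * θ)) / 2 := by
    intro θ
    push_cast
    rw [add_mul, sub_mul, Real.cos_add, Real.cos_sub]
    ring
  simp_rw [h]
  have hint : ∀ a : ℤ, IntervalIntegrable (fun θ : ℝ => Real.cos (a * θ)) volume 0 π := by
    intro a
    exact (Real.continuous_cos.comp (continuous_const.mul continuous_id)).intervalIntegrable _ _
  rw [intervalIntegral.integral_div, intervalIntegral.integral_add (hint _) (hint _),
    integral_cos_int_mul, integral_cos_int_mul]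

/-- The polynomial `d(x) = c·x^t + h`. -/
noncomputable def dFun (c h t : ℤ) : ℝ → ℝ := fun x => (c : ℝ) * x ^ t + (h : ℝ)

set_option maxHeartbeats 1000000 in
theorem gfpl_orthogonal_family (p0 : ℝ)
    (hp0 : p0 = 1 ∨ p0 = -1 ∨ p0 = 2 ∨ p0 = -2)
    (c h k t : ℤ) (hc : 0 < c) (ht : 0 < t) (htodd : Odd t) (hk : h ^ 2 < k)
    (p1 : ℝ → ℝ) (hp1 : ∀ x, (2 / p0) * p1 x = dFun c h t x)
    (s1 s2 : ℝ)
    (hs1 : s1 = ((Real.sqrt (k : ℝ) + (h : ℝ)) / (c : ℝ)) ^ ((t : ℝ)⁻¹))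
    (hs2 : s2 = ((Real.sqrt (k : ℝ) - (h : ℝ)) / (c : ℝ)) ^ ((t : ℝ)⁻¹))
    (n m : ℕ) :
    (n ≠ m →
      ∫ x in (-s1)..s2,
          GFPL p0 p1 (fun _ => -(k : ℝ) / 4) n x *
            GFPL p0 p1 (fun _ => -(k : ℝ) / 4) m x * x ^ (t - 1) /
              Real.sqrt ((k : ℝ) - dFun c h t x ^ 2) = 0) ∧
    (n = m →
      0 < ∫ x in (-s1)..s2,
          GFPL p0 p1 (fun _ => -(k : ℝ) / 4) n x *
            GFPL p0 p1 (fun _ => -(k : ℝ) / 4) m x * x ^ (t - 1) /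
              Real.sqrt ((k : ℝ) - dFun c h t x ^ 2)) := by
  have hp0ne : p0 ≠ 0 := by rcases hp0 with h|h|h|h <;> rw [h] <;> norm_num
  have hk0 : (0:ℝ) < (k:ℝ) := by
    have h1 : (h:ℝ)^2 < (k:ℝ) := by exact_mod_cast hk
    nlinarith [sq_nonneg (h:ℝ)]
  set K := Real.sqrt (k:ℝ) with hKdef
  have hK : 0 < K := Real.sqrt_pos.2 hk0
  have hK2 : K ^ 2 = (k:ℝ) := Real.sq_sqrt hk0.le
  have habs : |(h:ℝ)| < K := by
    rw [hKdef]
    refine (Real.lt_sqrt (abs_nonneg _)).2 ?_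
    rw [sq_abs]; exact_mod_cast hk
  obtain ⟨hh1, hh2⟩ := abs_lt.1 habs
  -- natural number exponent
  obtain ⟨j, hj⟩ := htodd
  set tn : ℕ := t.toNat with htn
  have htnt : (tn : ℤ) = t := Int.toNat_of_nonneg ht.le
  have htn1 : 1 ≤ tn := by omega
  have htnodd : Odd tn := ⟨j.toNat, by omega⟩
  set D : ℝ → ℝ := fun x => (c:ℝ) * x ^ tn + (h:ℝ) with hDdef
  have hDeq : ∀ x : ℝ, dFun c h t x = D x := by
    intro x; rw [dFun, ← htnt, zpow_natCast]
  have hc0 : (0:ℝ) < (c:ℝ) := by exact_mod_cast hc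
  have hDmono : StrictMono D := by
    intro a b hab
    have h1 := Odd.strictMono_pow (R := ℝ) htnodd hab
    simp only [hDdef]
    nlinarith
  have hDcont : Continuous D := by fun_prop
  -- endpoints
  have ha1 : (0:ℝ) < (K + h)/c := div_pos (by linarith) hc0
  have ha2 : (0:ℝ) < (K - h)/c := div_pos (by linarith) hc0
  have hs1pos : 0 < s1 := hs1 ▸ Real.rpow_pos_of_pos ha1 _
  have hs2pos : 0 < s2 := hs2 ▸ Real.rpow_pos_of_pos ha2 _
  have hinv : ((t:ℝ))⁻¹ = ((tn:ℕ):ℝ)⁻¹ := by rw [← htnt]; push_cast; ring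
  have hs1pow : s1 ^ tn = (K + h)/c := by
    rw [hs1, hinv, Real.rpow_inv_natCast_pow ha1.le (by omega)]
  have hs2pow : s2 ^ tn = (K - h)/c := by
    rw [hs2, hinv, Real.rpow_inv_natCast_pow ha2.le (by omega)]
  have hDs1 : D (-s1) = -K := by
    have hneg : (-s1) ^ tn = -(s1 ^ tn) := Odd.neg_pow htnodd s1
    simp only [hDdef]
    rw [hneg, hs1pow]
    field_simp
    ring
  have hDs2 : D s2 = K := by
    simp only [hDdef]
    rw [hs2pow]
    field_simp
    ring
  have himage : D '' Ioo (-s1) s2 = Ioo (-K) K := by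
    apply Subset.antisymm
    · rintro y ⟨x, hx, rfl⟩
      exact ⟨hDs1 ▸ hDmono hx.1, hDs2 ▸ hDmono hx.2⟩
    · have hle : -s1 ≤ s2 := by linarith
      have h2 := intermediate_value_Ioo hle hDcont.continuousOn
      rwa [hDs1, hDs2] at h2
  set ct : ℝ := (c:ℝ) * tn with hct
  have htnpos : (0:ℝ) < (tn:ℝ) := by exact_mod_cast htn1
  have hct0 : 0 < ct := mul_pos hc0 htnpos
  have hderiv : ∀ x : ℝ, HasDerivAt D (ct * x ^ (tn - 1)) x := by
    intro x
    have h1 := (hasDerivAt_pow tn x).const_mul (c:ℝ)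
    have h2 := h1.add_const (h:ℝ)
    simpa [hct, mul_assoc, hDdef] using h2
  have heven : Even (tn - 1) := by
    obtain ⟨r, hr⟩ := htnodd; exact ⟨r, by omega⟩
  have hxpow_nonneg : ∀ x : ℝ, 0 ≤ x ^ (tn - 1) := fun x => heven.pow_nonneg x
  -- GFPL in terms of Chebyshev polynomials
  have key : ∀ (N : ℕ) (x : ℝ), GFPL p0 p1 (fun _ => -(k:ℝ)/4) N x
      = p0 * (K/2)^N * (Polynomial.Chebyshev.T ℝ (N:ℤ)).eval (D x / K) := by
    intro N
    induction N using Nat.twoStepInduction with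
    | zero => intro x; simp [GFPL, Polynomial.Chebyshev.T_zero]
    | one =>
      intro x
      have hp1x : p1 x = p0 * D x / 2 := by
        have h2 := hp1 x
        rw [hDeq] at h2
        field_simp at h2 ⊢
        linarith
      simp only [GFPL, hp1x, Nat.cast_one, Polynomial.Chebyshev.T_one, Polynomial.eval_X, pow_one]
      field_simp
    | more N ih1 ih2 =>
      intro x
      have hrec : GFPL p0 p1 (fun _ => -(k:ℝ)/4) (N+2) x
          = D x * GFPL p0 p1 (fun _ => -(k:ℝ)/4) (N+1) x
            + (-(k:ℝ)/4) * GFPL p0 p1 (fun _ => -(k:ℝ)/4) N x := by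
        show (2 / p0) * p1 x * GFPL p0 p1 (fun _ => -(k:ℝ)/4) (N + 1) x
            + (-(k:ℝ)/4) * GFPL p0 p1 (fun _ => -(k:ℝ)/4) N x = _
        rw [hp1 x, hDeq]
      rw [hrec, ih1, ih2]
      have hT : Polynomial.Chebyshev.T ℝ ((N:ℤ)+2)
          = 2 * Polynomial.X * Polynomial.Chebyshev.T ℝ ((N:ℤ)+1) - Polynomial.Chebyshev.T ℝ (N:ℤ) :=
        Polynomial.Chebyshev.T_add_two ℝ N
      push_cast
      rw [hT]
      simp only [Polynomial.eval_mul, Polynomial.eval_sub, Polynomial.eval_ofNat, Polynomial.eval_X]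
      rw [← hK2]
      have hKne : K ≠ 0 := hK.ne'
      field_simp
      ring
  -- the intermediate function
  set A : ℝ := p0^2 * (K/2)^(n+m) with hA
  have hA0 : 0 < A := by positivity
  set G : ℝ → ℝ := fun u => A * ((Polynomial.Chebyshev.T ℝ (n:ℤ)).eval (u/K)
      * (Polynomial.Chebyshev.T ℝ (m:ℤ)).eval (u/K)) / (ct * Real.sqrt ((k:ℝ) - u^2)) with hG
  -- change of variables 1
  have hcov1 : ∫ u in Ioo (-K) K, G u
      = ∫ x in Ioo (-s1) s2, |ct * x ^ (tn-1)| • G (D x) := by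
    rw [← himage]
    exact integral_image_eq_integral_abs_deriv_smul measurableSet_Ioo
      (fun x _ => (hderiv x).hasDerivWithinAt) (hDmono.injective.injOn) G
  -- pointwise identification of the original integrand
  have hpt : ∀ x ∈ Ioo (-s1) s2,
      GFPL p0 p1 (fun _ => -(k:ℝ)/4) n x * GFPL p0 p1 (fun _ => -(k:ℝ)/4) m x * x ^ (t - 1) /
        Real.sqrt ((k:ℝ) - dFun c h t x ^ 2)
      = |ct * x ^ (tn-1)| • G (D x) := by
    intro x hx
    have hDx1 : -K < D x := hDs1 ▸ hDmono hx.1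
    have hDx2 : D x < K := hDs2 ▸ hDmono hx.2
    have hpos : 0 < (k:ℝ) - D x ^ 2 := by nlinarith
    have hsq : 0 < Real.sqrt ((k:ℝ) - D x ^ 2) := Real.sqrt_pos.2 hpos
    have hzp : x ^ (t - 1) = x ^ (tn - 1) := by
      rw [show t - 1 = ((tn - 1 : ℕ) : ℤ) by omega, zpow_natCast]
    have habs2 : |ct * x ^ (tn-1)| = ct * x ^ (tn-1) :=
      abs_of_nonneg (mul_nonneg hct0.le (hxpow_nonneg x))
    rw [key n x, key m x, hzp, hDeq, habs2, smul_eq_mul]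
    simp only [hG, hA]
    rw [pow_add]
    field_simp
  have hstep1 : (∫ x in (-s1)..s2,
      GFPL p0 p1 (fun _ => -(k:ℝ)/4) n x * GFPL p0 p1 (fun _ => -(k:ℝ)/4) m x * x ^ (t - 1) /
        Real.sqrt ((k:ℝ) - dFun c h t x ^ 2)) = ∫ u in Ioo (-K) K, G u := by
    rw [intervalIntegral.integral_of_le (by linarith), integral_Ioc_eq_integral_Ioo, hcov1]
    exact setIntegral_congr_fun measurableSet_Ioo hpt
  -- change of variables 2
  have hcos : ∀ θ : ℝ, HasDerivAt (fun θ => K * Real.cos θ) (-(K * Real.sin θ)) θ := by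
    intro θ
    have := (Real.hasDerivAt_cos θ).const_mul K
    simpa [mul_comm, mul_neg] using this
  have himage2 : (fun θ => K * Real.cos θ) '' Ioo 0 π = Ioo (-K) K := by
    apply Subset.antisymm
    · rintro y ⟨θ, hθ, rfl⟩
      have hm : θ ∈ Icc (0:ℝ) π := ⟨hθ.1.le, hθ.2.le⟩
      have h0 : (0:ℝ) ∈ Icc (0:ℝ) π := left_mem_Icc.2 Real.pi_pos.le
      have hπ : π ∈ Icc (0:ℝ) π := right_mem_Icc.2 Real.pi_pos.le
      have hlt1 : Real.cos θ < 1 := by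
        have := Real.strictAntiOn_cos h0 hm hθ.1
        simpa using this
      have hlt2 : -1 < Real.cos θ := by
        have := Real.strictAntiOn_cos hm hπ hθ.2
        simpa using this
      constructor
      · have h3 := mul_lt_mul_of_pos_left hlt2 hK
        simpa using h3
      · have h3 := mul_lt_mul_of_pos_left hlt1 hK
        simpa using h3
    · have h2 := intermediate_value_Ioo' (f := fun θ : ℝ => K * Real.cos θ)
        Real.pi_pos.le ((continuous_const.mul Real.continuous_cos).continuousOn)
      simpa using h2
  have hinj2 : InjOn (fun θ => K * Real.cos θ) (Ioo 0 π) := by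
    intro a ha b hb hab
    exact Real.injOn_cos ⟨ha.1.le, ha.2.le⟩ ⟨hb.1.le, hb.2.le⟩ (mul_left_cancel₀ hK.ne' hab)
  have hcov2 : ∫ u in Ioo (-K) K, G u
      = ∫ θ in Ioo (0:ℝ) π, |-(K * Real.sin θ)| • G (K * Real.cos θ) := by
    rw [← himage2]
    exact integral_image_eq_integral_abs_deriv_smul measurableSet_Ioo
      (fun θ _ => (hcos θ).hasDerivWithinAt) hinj2 G
  have hptθ : ∀ θ ∈ Ioo (0:ℝ) π, |-(K * Real.sin θ)| • G (K * Real.cos θ)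
      = (A/ct) * (Real.cos ((n:ℤ) * θ) * Real.cos ((m:ℤ) * θ)) := by
    intro θ hθ
    have hsin : 0 < Real.sin θ := Real.sin_pos_of_pos_of_lt_pi hθ.1 hθ.2
    have habs3 : |-(K * Real.sin θ)| = K * Real.sin θ := by
      rw [abs_neg, abs_of_pos (mul_pos hK hsin)]
    have hdivK : K * Real.cos θ / K = Real.cos θ := by field_simp
    have hsqrt : Real.sqrt ((k:ℝ) - (K * Real.cos θ)^2) = K * Real.sin θ := by
      have h1 : (k:ℝ) - (K * Real.cos θ)^2 = (K * Real.sin θ)^2 := by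
        have h2 := Real.sin_sq_add_cos_sq θ
        nlinarith
      rw [h1, Real.sqrt_sq (mul_pos hK hsin).le]
    rw [smul_eq_mul, habs3]
    simp only [hG, hA]
    rw [hdivK, hsqrt, Polynomial.Chebyshev.T_real_cos, Polynomial.Chebyshev.T_real_cos]
    have hne : K * Real.sin θ ≠ 0 := (mul_pos hK hsin).ne'
    field_simp
  have hstep2 : ∫ u in Ioo (-K) K, G u
      = (A/ct) * ∫ θ in (0:ℝ)..π, Real.cos ((n:ℤ) * θ) * Real.cos ((m:ℤ) * θ) := by
    rw [hcov2, setIntegral_congr_fun measurableSet_Ioo hptθ,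
      ← integral_Ioc_eq_integral_Ioo, ← intervalIntegral.integral_of_le Real.pi_pos.le,
      intervalIntegral.integral_const_mul]
  have hval := integral_cos_mul_cos_pi (n:ℤ) (m:ℤ)
  constructor
  · intro hnm
    rw [hstep1, hstep2, hval]
    have h1 : ¬((n:ℤ) + m = 0) := by omega
    have h2 : ¬((n:ℤ) - m = 0) := by omega
    rw [if_neg h1, if_neg h2]
    ring
  · intro hnm
    subst hnm
    rw [hstep1, hstep2, hval]
    have h2 : (n:ℤ) - n = 0 := by ring
    rw [if_pos h2]
    have hπ := Real.pi_pos
    rcases eq_or_ne ((n:ℤ) + n) 0 with h1 | h1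
    · rw [if_pos h1]; positivity
    · rw [if_neg h1]
      have : (0:ℝ) + π = π := by ring
      rw [this]
      positivity
end

section
/- Let c, h, k, t be integers with c ≠ 0, k > 0, t > 0. Let d(x) = c·x^t + h = α·p₁(x) and let g be the constant function g(x) = k/4. Let n, m be positive integers with n ≡ m (mod 2), let a > 0, and let w : ℝ → ℝ be a continuous function with w(x) > 0 for all x ∈ [−a, a]. Then ∫_{−a}^{a} (𝓛ₙ(x) · 𝓛ₘ(x) / w(x)) dx > 0; in particular this integral is nonzero. -/
theorem continuous_dFun {c h t : ℤ} (ht : 0 ≤ t) : Continuous (dFun c h t) :=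
  (continuous_const.mul (continuous_id.zpow₀ t fun _ => Or.inr ht)).add continuous_const

theorem exists_mem_Icc_dFun_ne_zero {c h t : ℤ} (hc : c ≠ 0) (ht : t ≠ 0) {a : ℝ} (ha : 0 < a) :
    ∃ x ∈ Set.Icc (-a) a, dFun c h t x ≠ 0 := by
  by_contra! hzero
  have hd0 := hzero 0 ⟨by linarith, ha.le⟩
  have hda := hzero a ⟨by linarith, le_rfl⟩
  simp only [dFun, zero_zpow _ ht, mul_zero, zero_add, Int.cast_eq_zero] at hd0 hda
  rw [hd0, Int.cast_zero, add_zero] at hda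
  exact zpow_ne_zero t ha.ne' ((mul_eq_zero.mp hda).resolve_left (Int.cast_ne_zero.mpr hc))

namespace GFPL

variable {p0 : ℝ} {p1 g : ℝ → ℝ}

theorem continuous (hp1 : Continuous p1) (hg : Continuous g) (n : ℕ) :
    Continuous (GFPL p0 p1 g n) := by
  induction n using GFPL.induct with
  | case1 => exact continuous_const
  | case2 => exact hp1
  | case3 n ih₁ ih₀ => exact ((continuous_const.mul hp1).mul ih₁).add (hg.mul ih₀)

variable {x : ℝ}

theorem sign_of_parity (hp0 : p0 ≠ 0) (hg : 0 < g x) (n : ℕ) :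
    (Even n → 0 < p0 * GFPL p0 p1 g n x) ∧ (Odd n → ∃ q > 0, GFPL p0 p1 g n x = p1 x * q) := by
  induction n using GFPL.induct with
  | case1 => exact ⟨fun _ => mul_self_pos.mpr hp0, fun h => absurd h Nat.not_odd_zero⟩
  | case2 => exact ⟨fun h => absurd h Nat.not_even_one, fun _ => ⟨1, one_pos, (mul_one _).symm⟩⟩
  | case3 n ih₁ ih₀ =>
    dsimp only [GFPL]
    refine ⟨fun hn => ?_, fun hn => ?_⟩
    · replace hn : Even n := (Nat.even_add.mp hn).mpr even_two
      obtain ⟨q, hq, hq_eq⟩ := ih₁.2 hn.add_one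
      have hL := ih₀.1 hn
      have : p0 * (2 / p0 * p1 x * (p1 x * q)) = 2 * p1 x ^ 2 * q := by field_simp
      rw [hq_eq, mul_add, this]
      nlinarith [mul_nonneg (sq_nonneg (p1 x)) hq.le, mul_pos hg hL]
    · replace hn : Odd n := (Nat.odd_add.mp hn).mpr even_two
      obtain ⟨q, hq, hq_eq⟩ := ih₀.2 hn
      -- `𝓛ₙ₊₂ = p₁ ((2/p₀) 𝓛ₙ₊₁ + g q)` and `(2/p₀) 𝓛ₙ₊₁ = 2 (p₀ 𝓛ₙ₊₁) / p₀²`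
      refine ⟨2 * (p0 * GFPL p0 p1 g (n + 1) x) / p0 ^ 2 + g x * q, ?_, ?_⟩
      · have := ih₁.1 hn.add_one
        positivity
      · rw [hq_eq]
        field_simp

theorem exists_pos_mul_eq_of_mod_two_eq (hp0 : p0 ≠ 0) (hg : 0 < g x) {n m : ℕ}
    (hnm : n % 2 = m % 2) :
    ∃ r > 0, GFPL p0 p1 g n x * GFPL p0 p1 g m x = r * (p1 x ^ 2) ^ (n % 2) := by
  rcases Nat.even_or_odd n with hn | hn
  · have hm : Even m := Nat.even_iff.mpr (hnm ▸ Nat.even_iff.mp hn)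
    have hn' := (sign_of_parity (p1 := p1) hp0 hg n).1 hn
    have hm' := (sign_of_parity (p1 := p1) hp0 hg m).1 hm
    refine ⟨(p0 * GFPL p0 p1 g n x) * (p0 * GFPL p0 p1 g m x) / p0 ^ 2, by positivity, ?_⟩
    rw [Nat.even_iff.mp hn]
    field_simp
  · have hm : Odd m := Nat.odd_iff.mpr (hnm ▸ Nat.odd_iff.mp hn)
    obtain ⟨q, hq, hq_eq⟩ := (sign_of_parity hp0 hg n).2 hn
    obtain ⟨r, hr, hr_eq⟩ := (sign_of_parity hp0 hg m).2 hm
    refine ⟨q * r, mul_pos hq hr, ?_⟩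
    rw [hq_eq, hr_eq, Nat.odd_iff.mp hn]
    ring

theorem mul_nonneg_of_mod_two_eq (hp0 : p0 ≠ 0) (hg : 0 < g x) {n m : ℕ}
    (hnm : n % 2 = m % 2) : 0 ≤ GFPL p0 p1 g n x * GFPL p0 p1 g m x := by
  obtain ⟨r, hr, hr_eq⟩ := exists_pos_mul_eq_of_mod_two_eq (p1 := p1) hp0 hg hnm
  rw [hr_eq]
  positivity

theorem mul_pos_of_mod_two_eq (hp0 : p0 ≠ 0) (hg : 0 < g x) (hp1 : p1 x ≠ 0) {n m : ℕ}
    (hnm : n % 2 = m % 2) : 0 < GFPL p0 p1 g n x * GFPL p0 p1 g m x := by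
  obtain ⟨r, hr, hr_eq⟩ := exists_pos_mul_eq_of_mod_two_eq (p1 := p1) hp0 hg hnm
  exact hr_eq ▸ mul_pos hr (pow_pos (pow_two_pos_of_ne_zero hp1) _)

end GFPL

theorem gfpl_not_orthogonal_same_parity_general (p0 : ℝ)
    (hp0 : p0 = 1 ∨ p0 = -1 ∨ p0 = 2 ∨ p0 = -2)
    (c h k t : ℤ) (hc : c ≠ 0) (hk : 0 < k) (ht : 0 < t)
    (p1 : ℝ → ℝ) (hp1 : ∀ x, (2 / p0) * p1 x = dFun c h t x)
    (n m : ℕ) (hnm : n % 2 = m % 2)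
    (a : ℝ) (ha : 0 < a)
    (w : ℝ → ℝ) (hw : Continuous w) (hwpos : ∀ x ∈ Set.Icc (-a) a, 0 < w x) :
    (0 < ∫ x in (-a)..a,
        GFPL p0 p1 (fun _ => (k : ℝ) / 4) n x *
          GFPL p0 p1 (fun _ => (k : ℝ) / 4) m x / w x) ∧
    (∫ x in (-a)..a,
        GFPL p0 p1 (fun _ => (k : ℝ) / 4) n x *
          GFPL p0 p1 (fun _ => (k : ℝ) / 4) m x / w x) ≠ 0 := by
  have hp0' : p0 ≠ 0 := by rcases hp0 with rfl | rfl | rfl | rfl <;> norm_num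
  have hp1_cont : Continuous p1 := by
    have hp1_eq : p1 = fun x => p0 / 2 * dFun c h t x := by
      funext x
      rw [← hp1]
      field_simp
    exact hp1_eq ▸ continuous_const.mul (continuous_dFun ht.le)
  set L := GFPL p0 p1 (fun _ => (k : ℝ) / 4)
  have hL_cont (j : ℕ) : Continuous (L j) := GFPL.continuous hp1_cont continuous_const j
  obtain ⟨x₀, hx₀, hd⟩ := exists_mem_Icc_dFun_ne_zero (h := h) hc ht.ne' ha
  have hpos : 0 < ∫ x in (-a)..a, L n x * L m x / w x := by
    refine intervalIntegral.integral_pos (by linarith) ?_ (fun x hx => ?_) ⟨x₀, hx₀, ?_⟩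
    · exact ((hL_cont n).mul (hL_cont m)).continuousOn.div hw.continuousOn
        fun x hx => (hwpos x hx).ne'
    · exact div_nonneg (GFPL.mul_nonneg_of_mod_two_eq hp0' (by positivity) hnm)
        (hwpos x (Set.Ioc_subset_Icc_self hx)).le
    · have hp1_ne : p1 x₀ ≠ 0 := fun h0 => hd (by rw [← hp1 x₀, h0, mul_zero])
      exact div_pos (GFPL.mul_pos_of_mod_two_eq hp0' (by positivity) hp1_ne hnm) (hwpos x₀ hx₀)
  exact ⟨hpos, hpos.ne'⟩

theorem gfpl_not_orthogonal_same_parity (p0 : ℝ)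
    (hp0 : p0 = 1 ∨ p0 = -1 ∨ p0 = 2 ∨ p0 = -2)
    (c h k t : ℤ) (hc : c ≠ 0) (hk : 0 < k) (ht : 0 < t)
    (p1 : ℝ → ℝ) (hp1 : ∀ x, (2 / p0) * p1 x = dFun c h t x)
    (n m : ℕ) (hn : 0 < n) (hm : 0 < m) (hnm : n % 2 = m % 2)
    (a : ℝ) (ha : 0 < a)
    (w : ℝ → ℝ) (hw : Continuous w) (hwpos : ∀ x ∈ Set.Icc (-a) a, 0 < w x) :
    (0 < ∫ x in (-a)..a,
        GFPL p0 p1 (fun _ => (k : ℝ) / 4) n x *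
          GFPL p0 p1 (fun _ => (k : ℝ) / 4) m x / w x) ∧
    (∫ x in (-a)..a,
        GFPL p0 p1 (fun _ => (k : ℝ) / 4) n x *
          GFPL p0 p1 (fun _ => (k : ℝ) / 4) m x / w x) ≠ 0 :=
  gfpl_not_orthogonal_same_parity_general p0 hp0 c h k t hc hk ht p1 hp1 n m hnm a ha w hw hwpos
end
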